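/- The HSIC-PA overall outage probability equals Pout = Σ_{i=0}^{M} C(M,i)·(−1)^i·e^{−i·αs}·(1 − e^{−(αs·P0·i + 1)·α1})/(αs·P0·i + 1) + (1 − e^{−αs})^M·e^{−α1}, where C(M,i) denotes the binomial coefficient. -/

import Mathlib

open MeasureTheory ProbabilityTheory Real

/-- The interference threshold `τ(g) = max{0, g/α₀ − 1}`. -/
noncomputable def tau (α0 g : ℝ) : ℝ := max 0 (g / α0 - 1)

/-- The HSIC-PA achievable rate of a secondary user with channel gain `h`,
given the primary channel gain `g`. -/
noncomputable def rateHSIC (P0 Ps α0 h g : ℝ) : ℝ :=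
  if Ps * h ≤ tau α0 g then Real.logb 2 (1 + Ps * h)
  else max (Real.logb 2 (1 + Ps * h / (P0 * g + 1))) (Real.logb 2 (1 + tau α0 g))

/-! Given the primary gain `g`, a secondary user with gain `h` is in outage iff `h < c(g)`, where
`c(g) = αs (P0 g + 1)` for `g < α1` (then `τ(g) < εs`, and only decoding after SIC can succeed)
and `c(g) = αs` for `g ≥ α1` (then `τ(g) ≥ εs`, so the user is in outage iff `Ps h < εs`).
Integrating out `G` against the product law of the independent gains gives
`Pout = ∫₀^∞ e^{-g} (1 - e^{-c(g)})^M dg`; on `[0, α1]` the binomial theorem turns the integrand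
into a sum of exponentials, and on `(α1, ∞)` it is a constant times `e^{-g}`. -/

open Set

lemma logb_two_one_add_lt_iff {x ε : ℝ} (hx : 0 ≤ x) (hε : 0 ≤ ε) :
    logb 2 (1 + x) < logb 2 (1 + ε) ↔ x < ε := by
  rw [logb_lt_logb_iff one_lt_two (by linarith) (by linarith), add_lt_add_iff_left]

lemma tau_lt_iff {α0 ε g : ℝ} (hα0 : 0 < α0) (hε : 0 < ε) :
    tau α0 g < ε ↔ g < (1 + ε) * α0 := by
  rw [tau, max_lt_iff, sub_lt_iff_lt_add', div_lt_iff₀ hα0]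
  exact and_iff_right hε

noncomputable def outageThreshold (P0 αs α1 g : ℝ) : ℝ :=
  if g < α1 then αs * (P0 * g + 1) else αs

section OutageThreshold

variable {P0 αs α1 : ℝ}

@[fun_prop]
lemma measurable_outageThreshold : Measurable (outageThreshold P0 αs α1) :=
  Measurable.ite measurableSet_Iio (by fun_prop) measurable_const

lemma outageThreshold_nonneg (hP0 : 0 ≤ P0) (hαs : 0 ≤ αs) {g : ℝ} (hg : 0 ≤ g) :
    0 ≤ outageThreshold P0 αs α1 g := by
  unfold outageThreshold
  split_ifs <;> positivity

end OutageThreshold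

lemma rateHSIC_lt_iff {P0 Ps εs α0 g h : ℝ} (hP0 : 0 < P0) (hPs : 0 < Ps) (hεs : 0 < εs)
    (hα0 : 0 < α0) (hg : 0 ≤ g) (hh : 0 ≤ h) :
    rateHSIC P0 Ps α0 h g < logb 2 (1 + εs) ↔
      h < outageThreshold P0 (εs / Ps) ((1 + εs) * α0) g := by
  have hd : 1 ≤ P0 * g + 1 := le_add_of_nonneg_left (mul_nonneg hP0.le hg)
  have hs : 0 ≤ Ps * h := mul_nonneg hPs.le hh
  have hlt : ∀ d, h < εs / Ps * d ↔ Ps * h < εs * d := fun d => by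
    rw [div_mul_eq_mul_div, lt_div_iff₀ hPs, mul_comm h]
  have hτ : 0 ≤ tau α0 g := le_max_left _ _
  unfold rateHSIC outageThreshold
  simp only [← tau_lt_iff hα0 hεs]
  split_ifs with hsτ hτε hτε <;>
    simp only [max_lt_iff, logb_two_one_add_lt_iff hs hεs.le, logb_two_one_add_lt_iff hτ hεs.le,
      logb_two_one_add_lt_iff (div_nonneg hs (by linarith : (0:ℝ) ≤ P0 * g + 1)) hεs.le,
      div_lt_iff₀ (by linarith : (0:ℝ) < P0 * g + 1), hlt, lt_div_iff₀' hPs, hτε, and_true,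
      and_false]
  · exact iff_of_true (hsτ.trans_lt hτε) (by nlinarith)
  · exact iff_of_false id (by linarith [not_le.1 hsτ, not_lt.1 hτε])

lemma iSup_lt_iff_of_finite_of_pos {ι : Type*} [Finite ι] {f : ι → ℝ} {r : ℝ} (hr : 0 < r) :
    (⨆ i, f i) < r ↔ ∀ i, f i < r := by
  rcases isEmpty_or_nonempty ι with hι | hι
  · simp [Real.iSup_of_isEmpty, hr]
  · refine ⟨fun h i => (le_ciSup (Finite.bddAbove_range f) i).trans_lt h, fun h => ?_⟩
    obtain ⟨i, hi⟩ := exists_eq_ciSup_of_finite (f := f)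
    exact hi ▸ h i

lemma measure_forall_lt_comp_eq_lintegral {Ω : Type*} [MeasurableSpace Ω] {μ : Measure Ω}
    [IsProbabilityMeasure μ] {M : ℕ} {G : Ω → ℝ} {H : Fin M → Ω → ℝ} (hG : Measurable G)
    (hH : ∀ m, Measurable (H m)) (hind : iIndepFun (Fin.cons G H : Fin (M + 1) → Ω → ℝ) μ)
    {ν₀ ν : Measure ℝ} [SigmaFinite ν₀] [SigmaFinite ν] (hGlaw : μ.map G = ν₀)
    (hHlaw : ∀ m, μ.map (H m) = ν)
    {c : ℝ → ℝ} (hc : Measurable c) :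
    μ {ω | ∀ m, H m ω < c (G ω)} = ∫⁻ g, ν (Iio (c g)) ^ M ∂ν₀ := by
  set X : Fin (M + 1) → Ω → ℝ := Fin.cons G H
  have hX : ∀ i, Measurable (X i) := Fin.cases hG hH
  have hlaw : μ.map (fun ω i => X i ω) = Measure.pi (Fin.cons ν₀ fun _ => ν) := by
    rw [hind.map_fun_eq_pi_map fun i => (hX i).aemeasurable]
    congr 1
    funext i
    induction i using Fin.cases <;> simp [X, hGlaw, hHlaw]
  have hpair :
      μ.map (fun ω => (G ω, fun m => H m ω)) = ν₀.prod (Measure.pi fun _ : Fin M => ν) := by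
    have : ∀ i, SigmaFinite ((Fin.cons ν₀ fun _ => ν : Fin (M + 1) → Measure ℝ) i) :=
      Fin.cases (by simpa) fun _ => by simpa
    have he :=
      measurePreserving_piFinSuccAbove (Fin.cons ν₀ fun _ => ν : Fin (M + 1) → Measure ℝ) 0
    simp only [Fin.cons_zero, Fin.succAbove_zero, Fin.cons_succ] at he
    rw [← he.map_eq, ← hlaw, Measure.map_map he.measurable (measurable_pi_lambda _ hX)]
    rfl
  have hS : MeasurableSet {p : ℝ × (Fin M → ℝ) | ∀ m, p.2 m < c p.1} := by
    simp only [ofPred_forall]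
    exact .iInter fun m =>
      measurableSet_lt ((measurable_pi_apply m).comp measurable_snd) (hc.comp measurable_fst)
  calc μ {ω | ∀ m, H m ω < c (G ω)}
      = μ.map (fun ω => (G ω, fun m => H m ω)) {p | ∀ m, p.2 m < c p.1} := by
        rw [Measure.map_apply (hG.prodMk (measurable_pi_lambda _ hH)) hS]
        rfl
    _ = ∫⁻ g, ν (Iio (c g)) ^ M ∂ν₀ := by
        rw [hpair, Measure.prod_apply hS]
        congr 1 with g
        have hsec : Prod.mk g ⁻¹' {p : ℝ × (Fin M → ℝ) | ∀ m, p.2 m < c p.1} =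
            univ.pi fun _ => Iio (c g) := by
          ext; simp
        rw [hsec, Measure.pi_pi, Finset.prod_const, Finset.card_univ, Fintype.card_fin]

instance nullSingletonClass_expMeasure (r : ℝ) : NullSingletonClass (expMeasure r) :=
  nullSingletonClass_withDensity _

lemma expMeasure_Iio {r : ℝ} (hr : 0 < r) (t : ℝ) :
    expMeasure r (Iio t) = ENNReal.ofReal (1 - exp (-(r * t))) := by
  have := isProbabilityMeasure_expMeasure hr
  rw [measure_congr Iio_ae_eq_Iic, ← ofReal_cdf, cdf_expMeasure_eq hr]
  split_ifs with ht
  · rfl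
  · rw [ENNReal.ofReal_zero, eq_comm, ENNReal.ofReal_eq_zero, sub_nonpos]
    exact one_le_exp (by nlinarith)

lemma lintegral_expMeasure {r : ℝ} {f : ℝ → ENNReal} (hf : Measurable f) :
    ∫⁻ x, f x ∂expMeasure r = ∫⁻ x in Ioi 0, ENNReal.ofReal (r * exp (-(r * x))) * f x := by
  change ∫⁻ x, f x ∂volume.withDensity (exponentialPDF r) = _
  rw [lintegral_withDensity_eq_lintegral_mul _
      (show Measurable (exponentialPDF r) from (measurable_exponentialPDFReal r).ennreal_ofReal) hf,
    setLIntegral_congr Ioi_ae_eq_Ici, ← lintegral_indicator measurableSet_Ici]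
  congr 1
  funext x
  by_cases hx : 0 ≤ x <;> simp [exponentialPDF_eq, hx]

lemma integral_exp_neg_mul {k b : ℝ} (hk : k ≠ 0) :
    ∫ x in (0:ℝ)..b, exp (-k * x) = (1 - exp (-k * b)) / k := by
  have h := intervalIntegral.integral_comp_mul_left (a := 0) (b := b) exp (neg_ne_zero.2 hk)
  simp only [integral_exp, mul_zero, exp_zero, smul_eq_mul] at h
  rw [h, inv_neg, neg_mul, ← mul_neg, neg_sub, div_eq_inv_mul]

lemma exp_neg_mul_one_sub_exp_pow_eq_sum (a b g : ℝ) (M : ℕ) :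
    exp (-g) * (1 - exp (-(a * (b * g + 1)))) ^ M =
      ∑ i ∈ Finset.range (M + 1),
        (M.choose i : ℝ) * (-1) ^ i * exp (-i * a) * exp (-(a * b * i + 1) * g) := by
  rw [sub_eq_neg_add, add_pow, Finset.mul_sum]
  refine Finset.sum_congr rfl fun i _ => ?_
  have hexp :
      exp (-g) * exp (i * -(a * (b * g + 1))) = exp (-i * a) * exp (-(a * b * i + 1) * g) := by
    rw [← exp_add, ← exp_add]
    ring_nf
  rw [neg_pow, one_pow, ← exp_nat_mul]
  linear_combination ((M.choose i : ℝ) * (-1) ^ i) * hexp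

lemma integral_exp_neg_mul_one_sub_exp_pow {a b : ℝ} (hab : 0 ≤ a * b) (T : ℝ) (M : ℕ) :
    ∫ g in (0:ℝ)..T, exp (-g) * (1 - exp (-(a * (b * g + 1)))) ^ M =
      ∑ i ∈ Finset.range (M + 1),
        (M.choose i : ℝ) * (-1) ^ i * exp (-i * a) * (1 - exp (-(a * b * i + 1) * T)) /
          (a * b * i + 1) := by
  simp only [exp_neg_mul_one_sub_exp_pow_eq_sum]
  rw [intervalIntegral.integral_finsetSum fun i _ =>
    (by fun_prop : Continuous _).intervalIntegrable _ _]
  refine Finset.sum_congr rfl fun i _ => ?_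
  have hk : 0 < a * b * i + 1 := by positivity
  rw [intervalIntegral.integral_const_mul, integral_exp_neg_mul hk.ne', mul_div_assoc]

lemma one_sub_exp_neg_mem_Icc {t : ℝ} (ht : 0 ≤ t) : 1 - exp (-t) ∈ Icc 0 1 :=
  ⟨sub_nonneg.2 (exp_le_one_iff.2 (neg_nonpos.2 ht)), sub_le_self _ (exp_pos _).le⟩

lemma integrableOn_Ioi_exp_neg_mul_one_sub_exp_neg_pow {c : ℝ → ℝ} (hc : Measurable c)
    (hc0 : ∀ g, 0 < g → 0 ≤ c g) (M : ℕ) :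
    IntegrableOn (fun g => exp (-g) * (1 - exp (-c g)) ^ M) (Ioi 0) := by
  refine (integrableOn_exp_neg_Ioi 0).mul_bdd (c := 1) (by fun_prop) <|
    (ae_restrict_iff' measurableSet_Ioi).2 <| .of_forall fun g hg => ?_
  obtain ⟨h0, h1⟩ := one_sub_exp_neg_mem_Icc (hc0 g hg)
  rw [norm_pow, Real.norm_of_nonneg h0]
  exact pow_le_one₀ h0 h1

lemma toReal_lintegral_Ioi_exp_neg_mul_one_sub_exp_neg_pow {c : ℝ → ℝ} (hc : Measurable c)
    (hc0 : ∀ g, 0 < g → 0 ≤ c g) (M : ℕ) :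
    (∫⁻ g in Ioi 0, ENNReal.ofReal (exp (-g)) * ENNReal.ofReal (1 - exp (-c g)) ^ M).toReal =
      ∫ g in Ioi 0, exp (-g) * (1 - exp (-c g)) ^ M := by
  have hnn : 0 ≤ᵐ[volume.restrict (Ioi 0)] fun g => exp (-g) * (1 - exp (-c g)) ^ M :=
    (ae_restrict_iff' measurableSet_Ioi).2 <| .of_forall fun g hg =>
      mul_nonneg (exp_pos _).le (pow_nonneg (one_sub_exp_neg_mem_Icc (hc0 g hg)).1 _)
  rw [← ENNReal.toReal_ofReal (integral_nonneg_of_ae hnn), ofReal_integral_eq_lintegral_ofReal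
    (integrableOn_Ioi_exp_neg_mul_one_sub_exp_neg_pow hc hc0 M) hnn]
  congr 1
  refine setLIntegral_congr_fun measurableSet_Ioi fun g hg => ?_
  rw [ENNReal.ofReal_mul (exp_pos _).le,
    ENNReal.ofReal_pow (one_sub_exp_neg_mem_Icc (hc0 g hg)).1]

lemma integral_Ioi_exp_neg_mul_one_sub_exp_neg_outageThreshold_pow {P0 αs α1 : ℝ}
    (hP0 : 0 ≤ P0) (hαs : 0 < αs) (hα1 : 0 ≤ α1) (M : ℕ) :
    ∫ g in Ioi 0, exp (-g) * (1 - exp (-outageThreshold P0 αs α1 g)) ^ M =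
      (∑ i ∈ Finset.range (M + 1),
        (M.choose i : ℝ) * (-1) ^ i * exp (-i * αs) * (1 - exp (-(αs * P0 * i + 1) * α1)) /
          (αs * P0 * i + 1)) + (1 - exp (-αs)) ^ M * exp (-α1) := by
  have hint := integrableOn_Ioi_exp_neg_mul_one_sub_exp_neg_pow measurable_outageThreshold
    (fun g hg => outageThreshold_nonneg (α1 := α1) hP0 hαs.le hg.le) M
  rw [← intervalIntegral.integral_interval_add_Ioi hint (hint.mono_set (Ioi_subset_Ioi hα1)),
    ← integral_exp_neg_mul_one_sub_exp_pow (mul_nonneg hαs.le hP0) α1 M]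
  congr 1
  · rw [intervalIntegral.integral_of_le hα1, intervalIntegral.integral_of_le hα1,
      integral_Ioc_eq_integral_Ioo, integral_Ioc_eq_integral_Ioo]
    exact setIntegral_congr_fun measurableSet_Ioo fun g hg => by simp [outageThreshold, hg.2]
  · have hconst : EqOn (fun g => exp (-g) * (1 - exp (-outageThreshold P0 αs α1 g)) ^ M)
        (fun g => exp (-g) * (1 - exp (-αs)) ^ M) (Ioi α1) := fun g (hg : α1 < g) => by
      simp [outageThreshold, not_lt.2 hg.le]
    rw [setIntegral_congr_fun measurableSet_Ioi hconst, integral_mul_const, integral_exp_neg_Ioi,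
      mul_comm]

theorem hsic_pa_outage_closed_form_general
    {Ω : Type*} [MeasurableSpace Ω] (μ : Measure Ω) [IsProbabilityMeasure μ]
    (M : ℕ)
    (P0 Ps R0 Rs : ℝ) (hP0 : 0 < P0) (hPs : 0 < Ps) (hR0 : 0 < R0) (hRs : 0 < Rs)
    (ε0 εs α0 αs α1 : ℝ)
    (hε0 : ε0 = 2 ^ R0 - 1) (hεs : εs = 2 ^ Rs - 1)
    (hα0 : α0 = ε0 / P0) (hαs : αs = εs / Ps) (hα1 : α1 = (1 + εs) * α0)
    (G : Ω → ℝ) (H : Fin M → Ω → ℝ)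
    (hGmeas : Measurable G) (hHmeas : ∀ m, Measurable (H m))
    (hGnn : ∀ ω, 0 ≤ G ω) (hHnn : ∀ m ω, 0 ≤ H m ω)
    (hGdist : Measure.map G μ = expMeasure 1)
    (hHdist : ∀ m, Measure.map (H m) μ = expMeasure 1)
    (hIndep : iIndepFun
      (Fin.cons G H : Fin (M + 1) → Ω → ℝ) μ)
    :
    (μ {ω | (⨆ m : Fin M, rateHSIC P0 Ps α0 (H m ω) (G ω)) < Rs}).toReal =
      (∑ i ∈ Finset.range (M + 1),
        (M.choose i : ℝ) * (-1 : ℝ) ^ i * Real.exp (-(i : ℝ) * αs) *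
          (1 - Real.exp (-(αs * P0 * i + 1) * α1)) / (αs * P0 * i + 1)) +
      (1 - Real.exp (-αs)) ^ M * Real.exp (-α1) := by
  have hεs_pos : 0 < εs := hεs ▸ sub_pos.2 (one_lt_rpow one_lt_two hRs)
  have hα0_pos : 0 < α0 := hα0 ▸ div_pos (hε0 ▸ sub_pos.2 (one_lt_rpow one_lt_two hR0)) hP0
  have hαs_pos : 0 < αs := hαs ▸ div_pos hεs_pos hPs
  have hα1_nonneg : 0 ≤ α1 := hα1 ▸ by positivity
  have hRs_eq : Rs = logb 2 (1 + εs) := by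
    rw [hεs, add_sub_cancel, logb_rpow two_pos (by norm_num)]
  have hevent : {ω | (⨆ m : Fin M, rateHSIC P0 Ps α0 (H m ω) (G ω)) < Rs} =
      {ω | ∀ m, H m ω < outageThreshold P0 αs α1 (G ω)} := by
    ext ω
    rw [mem_ofPred_eq, mem_ofPred_eq, iSup_lt_iff_of_finite_of_pos hRs, hRs_eq, hαs, hα1]
    simp only [rateHSIC_lt_iff hP0 hPs hεs_pos hα0_pos (hGnn ω) (hHnn _ ω)]
  have := isProbabilityMeasure_expMeasure one_pos
  rw [hevent, measure_forall_lt_comp_eq_lintegral hGmeas hHmeas hIndep hGdist hHdist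
    measurable_outageThreshold]
  simp only [expMeasure_Iio one_pos, one_mul]
  rw [lintegral_expMeasure (by fun_prop)]
  simp only [one_mul]
  rw [toReal_lintegral_Ioi_exp_neg_mul_one_sub_exp_neg_pow measurable_outageThreshold
      (fun g hg => outageThreshold_nonneg hP0.le hαs_pos.le hg.le) M,
    integral_Ioi_exp_neg_mul_one_sub_exp_neg_outageThreshold_pow hP0.le hαs_pos hα1_nonneg M]

/-- Theorem 1: closed form for the HSIC-PA overall outage probability. -/
theorem hsic_pa_outage_closed_form
    {Ω : Type*} [MeasurableSpace Ω] (μ : Measure Ω) [IsProbabilityMeasure μ]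
    (M : ℕ) (hM : 1 ≤ M)
    (P0 Ps R0 Rs : ℝ) (hP0 : 0 < P0) (hPs : 0 < Ps) (hR0 : 0 < R0) (hRs : 0 < Rs)
    (ε0 εs α0 αs α1 : ℝ)
    (hε0 : ε0 = 2 ^ R0 - 1) (hεs : εs = 2 ^ Rs - 1)
    (hα0 : α0 = ε0 / P0) (hαs : αs = εs / Ps) (hα1 : α1 = (1 + εs) * α0)
    (G : Ω → ℝ) (H : Fin M → Ω → ℝ)
    (hGmeas : Measurable G) (hHmeas : ∀ m, Measurable (H m))
    (hGnn : ∀ ω, 0 ≤ G ω) (hHnn : ∀ m ω, 0 ≤ H m ω)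
    (hGdist : Measure.map G μ = expMeasure 1)
    (hHdist : ∀ m, Measure.map (H m) μ = expMeasure 1)
    (hIndep : iIndepFun
      (Fin.cons G H : Fin (M + 1) → Ω → ℝ) μ)
    (Z : Ω → ℝ) (hZ : ∀ ω, Z ω = ⨆ m : Fin M, H m ω)
    :
    (μ {ω | (⨆ m : Fin M, rateHSIC P0 Ps α0 (H m ω) (G ω)) < Rs}).toReal =
      (∑ i ∈ Finset.range (M + 1),
        (M.choose i : ℝ) * (-1 : ℝ) ^ i * Real.exp (-(i : ℝ) * αs) *
          (1 - Real.exp (-(αs * P0 * i + 1) * α1)) / (αs * P0 * i + 1)) +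
      (1 - Real.exp (-αs)) ^ M * Real.exp (-α1) :=
  hsic_pa_outage_closed_form_general μ M P0 Ps R0 Rs hP0 hPs hR0 hRs ε0 εs α0 αs α1 hε0 hεs hα0 hαs
    hα1 G H hGmeas hHmeas hGnn hHnn hGdist hHdist hIndep
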